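/- arXiv:2210.01176 — 4 statements merged into one kernel-verified Lean document; each statement's English description precedes it below -/
import Mathlib

section
/- Let $f_i: \mathbb{R}^d \to \mathbb{R}$ be differentiable, $L$-smooth, bounded below, and $\lambda > L$. Let $\hat\theta_i(w)$ be the unique minimizer of $\theta \mapsto f_i(\theta) + \frac{\lambda}{2}\|\theta-w\|^2$. Then for all $w, v \in \mathbb{R}^d$: $\|\lambda(w - \hat\theta_i(w)) - \lambda(v - \hat\theta_i(v))\| \leq \frac{\lambda L}{\lambda - L}\|w - v\|$. In particular, the gradient of the Moreau envelope $F_i^{(c)}(w) = \min_\theta [f_i(\theta)+\frac{\lambda}{2}\|\theta-w\|^2]$ is $\frac{\lambda L}{\lambda - L}$-Lipschitz. -/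
open InnerProductSpace

lemma key_opt (d : ℕ) (f : EuclideanSpace ℝ (Fin d) → ℝ) (lam : ℝ)
    (hdiff : Differentiable ℝ f)
    (θhat : EuclideanSpace ℝ (Fin d) → EuclideanSpace ℝ (Fin d))
    (hθhat : ∀ w θ, f (θhat w) + lam / 2 * ‖θhat w - w‖ ^ 2
        ≤ f θ + lam / 2 * ‖θ - w‖ ^ 2)
    (w : EuclideanSpace ℝ (Fin d)) :
    gradient f (θhat w) = lam • (w - θhat w) := by
  set a := θhat w
  have hmin : IsLocalMin (fun θ => f θ + lam / 2 * ‖θ - w‖ ^ 2) a :=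
    Filter.Eventually.of_forall (fun θ => hθhat w θ)
  have hsq : HasFDerivAt (fun θ : EuclideanSpace ℝ (Fin d) => ‖θ - w‖ ^ 2)
      (2 • (innerSL ℝ (a - w))) a := by
    have h1 : HasFDerivAt (fun θ : EuclideanSpace ℝ (Fin d) => θ - w)
        (ContinuousLinearMap.id ℝ _) a := (hasFDerivAt_id a).sub_const w
    simpa using h1.norm_sq
  have hF : HasFDerivAt (fun θ => f θ + lam / 2 * ‖θ - w‖ ^ 2)
      ((toDual ℝ _ (gradient f a)) + (lam / 2) • (2 • (innerSL ℝ (a - w)))) a :=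
    ((hdiff a).hasGradientAt.hasFDerivAt).add (hsq.const_smul (lam / 2))
  have h0 := hmin.hasFDerivAt_eq_zero hF
  have h0' : toDual ℝ (EuclideanSpace ℝ (Fin d)) (gradient f a + lam • (a - w)) =
      toDual ℝ (EuclideanSpace ℝ (Fin d)) 0 := by
    rw [map_zero, ← h0]
    ext u
    simp [inner_add_left, real_inner_smul_left]
    ring
  have h2 : gradient f a + lam • (a - w) = 0 :=
    (toDual ℝ (EuclideanSpace ℝ (Fin d))).injective h0'
  rw [eq_neg_of_add_eq_zero_left h2, ← smul_neg, neg_sub]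

theorem stmt_7 (d : ℕ) (f : EuclideanSpace ℝ (Fin d) → ℝ) (L lam : ℝ)
    (hdiff : Differentiable ℝ f)
    (hsmooth : ∀ w u, ‖gradient f w - gradient f u‖ ≤ L * ‖w - u‖)
    (hbdd : BddBelow (Set.range f))
    (hlam : L < lam)
    (θhat : EuclideanSpace ℝ (Fin d) → EuclideanSpace ℝ (Fin d))
    (hθhat : ∀ w θ, f (θhat w) + lam / 2 * ‖θhat w - w‖ ^ 2
        ≤ f θ + lam / 2 * ‖θ - w‖ ^ 2)
    (w v : EuclideanSpace ℝ (Fin d)) :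
    ‖lam • (w - θhat w) - lam • (v - θhat v)‖ ≤ lam * L / (lam - L) * ‖w - v‖ := by
  have hkey := key_opt d f lam hdiff θhat hθhat
  rcases d with _ | d
  · simp [Subsingleton.elim w v, Subsingleton.elim (θhat w) (θhat v)]
  have hL0 : (0:ℝ) ≤ L := by
    have h := hsmooth (EuclideanSpace.single 0 (1:ℝ)) 0
    have h2 : (0:ℝ) ≤ L * ‖EuclideanSpace.single (0 : Fin (d+1)) (1:ℝ) - 0‖ :=
      le_trans (norm_nonneg _) h
    simp [EuclideanSpace.norm_single] at h2
    linarith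
  have hlam0 : (0:ℝ) ≤ lam := by linarith
  -- LHS equals ‖∇f(θ̂w) - ∇f(θ̂v)‖
  have hL : ‖lam • (w - θhat w) - lam • (v - θhat v)‖
      = ‖gradient f (θhat w) - gradient f (θhat v)‖ := by
    rw [hkey w, hkey v]
  rw [hL]
  set A := θhat w
  set B := θhat v
  have h1 : ‖gradient f A - gradient f B‖ ≤ L * ‖A - B‖ := hsmooth A B
  -- bound ‖A - B‖
  have hgap : lam * ‖A - B‖ ≤ lam * ‖w - v‖ + L * ‖A - B‖ := by
    have e : lam • (A - B) = lam • (w - v) - (gradient f A - gradient f B) := by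
      rw [hkey w, hkey v]
      module
    calc lam * ‖A - B‖ = ‖lam • (A - B)‖ := by
          rw [norm_smul, Real.norm_eq_abs, abs_of_nonneg hlam0]
      _ = ‖lam • (w - v) - (gradient f A - gradient f B)‖ := by rw [e]
      _ ≤ ‖lam • (w - v)‖ + ‖gradient f A - gradient f B‖ := norm_sub_le _ _
      _ ≤ lam * ‖w - v‖ + L * ‖A - B‖ := by
          gcongr
          · rw [norm_smul, Real.norm_eq_abs]
            rw [abs_of_nonneg hlam0]
  have hAB : ‖A - B‖ ≤ lam / (lam - L) * ‖w - v‖ := by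
    rw [div_mul_eq_mul_div, le_div_iff₀ (by linarith)]
    nlinarith [hgap]
  calc ‖gradient f A - gradient f B‖ ≤ L * ‖A - B‖ := h1
    _ ≤ L * (lam / (lam - L) * ‖w - v‖) := by gcongr
    _ = lam * L / (lam - L) * ‖w - v‖ := by ring
end

section
/- Let $f_i: \mathbb{R}^d \to \mathbb{R}$ be differentiable, $L$-smooth, and $\lambda > L$. Let $\hat\theta_i(w)$ be the unique minimizer of $\theta \mapsto f_i(\theta) + \frac{\lambda}{2}\|\theta - w\|^2$. Then for all $w, v \in \mathbb{R}^d$: $\|\hat\theta_i(w) - \hat\theta_i(v)\| \leq \frac{\lambda}{\lambda - L}\|w - v\|$, i.e., the proximal map is Lipschitz with constant $\frac{\lambda}{\lambda - L}$. -/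
/-!
At a minimizer `θ̂(w)` of `f θ + λ/2 ‖θ - w‖²` the first-order condition reads
`∇f(θ̂(w)) = λ (w - θ̂(w))`. Subtracting these conditions at `w` and `v` gives
`λ (θ̂(w) - θ̂(v)) = λ (w - v) - (∇f(θ̂(w)) - ∇f(θ̂(v)))`, and `L`-smoothness bounds the last
term by `L ‖θ̂(w) - θ̂(v)‖`, which is absorbed on the left since `λ > L`.
-/

theorem nonneg_of_norm_sub_le_mul_norm_sub {E F : Type*} [NormedAddCommGroup E] [Nontrivial E]
    [NormedAddCommGroup F] {g : E → F} {L : ℝ} (hg : ∀ x y, ‖g x - g y‖ ≤ L * ‖x - y‖) :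
    0 ≤ L := by
  obtain ⟨x, hx⟩ := exists_ne (0 : E)
  have h := (norm_nonneg _).trans (hg x 0)
  rw [sub_zero] at h
  exact nonneg_of_mul_nonneg_left h (norm_pos_iff.mpr hx)

theorem gradient_eq_smul_sub_of_isLocalMin_add_sq_norm {E : Type*} [NormedAddCommGroup E]
    [InnerProductSpace ℝ E] [CompleteSpace E] {f : E → ℝ} {lam : ℝ} {w a : E}
    (hf : DifferentiableAt ℝ f a) (hmin : IsLocalMin (fun θ => f θ + lam / 2 * ‖θ - w‖ ^ 2) a) :
    gradient f a = lam • (w - a) := by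
  have hsq : HasFDerivAt (fun θ => ‖θ - w‖ ^ 2) (2 • innerSL ℝ (a - w)) a := by
    simpa using ((hasFDerivAt_id a).sub_const w).norm_sq
  have hzero := hmin.hasFDerivAt_eq_zero (hf.hasFDerivAt.add (hsq.const_mul (lam / 2)))
  refine ext_inner_right ℝ fun y => ?_
  have hy := DFunLike.congr_fun hzero y
  simp only [add_apply, smul_apply, zero_apply, innerSL_apply_apply, smul_eq_mul,
    nsmul_eq_mul] at hy
  rw [inner_gradient_left, real_inner_smul_left, ← neg_sub a w, inner_neg_left]
  push_cast at hy
  linarith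

theorem norm_sub_le_of_eq_smul_sub {E : Type*} [NormedAddCommGroup E] [NormedSpace ℝ E]
    {g : E → E} {L lam : ℝ} {a b w v : E} (hlam : 0 < lam) (hL : L < lam)
    (hg : ‖g a - g b‖ ≤ L * ‖a - b‖) (ha : g a = lam • (w - a)) (hb : g b = lam • (v - b)) :
    ‖a - b‖ ≤ lam / (lam - L) * ‖w - v‖ := by
  have hab : lam • (a - b) = lam • (w - v) - (g a - g b) := by
    rw [ha, hb]; module
  have key : lam * ‖a - b‖ ≤ lam * ‖w - v‖ + L * ‖a - b‖ := by
    calc lam * ‖a - b‖ = ‖lam • (w - v) - (g a - g b)‖ := by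
          rw [← hab, norm_smul, Real.norm_of_nonneg hlam.le]
      _ ≤ ‖lam • (w - v)‖ + ‖g a - g b‖ := norm_sub_le _ _
      _ ≤ lam * ‖w - v‖ + L * ‖a - b‖ := by
          rw [norm_smul, Real.norm_of_nonneg hlam.le]; gcongr
  rw [div_mul_eq_mul_div, le_div_iff₀ (sub_pos.mpr hL)]
  linarith

theorem stmt_9 (d : ℕ) (f : EuclideanSpace ℝ (Fin d) → ℝ) (L lam : ℝ)
    (hdiff : Differentiable ℝ f)
    (hsmooth : ∀ w u, ‖gradient f w - gradient f u‖ ≤ L * ‖w - u‖)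
    (hlam : L < lam)
    (θhat : EuclideanSpace ℝ (Fin d) → EuclideanSpace ℝ (Fin d))
    (hθhat : ∀ w θ, f (θhat w) + lam / 2 * ‖θhat w - w‖ ^ 2
        ≤ f θ + lam / 2 * ‖θ - w‖ ^ 2)
    (w v : EuclideanSpace ℝ (Fin d)) :
    ‖θhat w - θhat v‖ ≤ lam / (lam - L) * ‖w - v‖ := by
  cases subsingleton_or_nontrivial (EuclideanSpace ℝ (Fin d))
  · simp [Subsingleton.elim w v]
  have hlam0 : 0 < lam := (nonneg_of_norm_sub_le_mul_norm_sub hsmooth).trans_lt hlam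
  have hopt : ∀ u, gradient f (θhat u) = lam • (u - θhat u) := fun u =>
    gradient_eq_smul_sub_of_isLocalMin_add_sq_norm (hdiff _)
      (Filter.Eventually.of_forall (hθhat u))
  exact norm_sub_le_of_eq_smul_sub hlam0 hlam (hsmooth _ _) (hopt w) (hopt v)
end

section
/- Let $f_i: \mathbb{R}^d \to \mathbb{R}$ be twice continuously differentiable with $\|\nabla f_i(w) - \nabla f_i(u)\| \leq L\|w-u\|$, $\|\nabla^2 f_i(w) - \nabla^2 f_i(u)\| \leq \rho\|w-u\|$ (operator norm), and $\|\nabla f_i(w)\| \leq G$ for all $w,u$. Let $\alpha \geq 0$ and define $F_i^{(b)}(w) = f_i(w - \alpha \nabla f_i(w))$. Then $F_i^{(b)}$ is $L_b$-smooth with $L_b = L(1+\alpha L)^2 + \alpha \rho G$, i.e., $\|\nabla F_i^{(b)}(w) - \nabla F_i^{(b)}(u)\| \leq L_b \|w - u\|$ for all $w, u \in \mathbb{R}^d$. -/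
/-!
`F = f ∘ φ` with the gradient step `φ = id - α • ∇f`, so `DF(w) = Df(φ w) ∘ Dφ(w)`. Splitting
`A₁B₁ - A₂B₂ = (A₁ - A₂)B₁ + A₂(B₁ - B₂)`, the first term costs `L · (1 + αL)` (Lipschitz constant
of `Df` times that of `φ`) times `‖Dφ‖ ≤ 1 + αL`, and the second costs `‖Df‖ ≤ G` times the
Lipschitz constant `αρ` of `Dφ = id - α • D∇f`. Since the Riesz map is an isometry, the same
bounds hold for `∇F`.
-/

open scoped NNReal

section Composition

variable {𝕜 E F G : Type*} [NontriviallyNormedField 𝕜]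
  [NormedAddCommGroup E] [NormedSpace 𝕜 E] [NormedAddCommGroup F] [NormedSpace 𝕜 F]
  [NormedAddCommGroup G] [NormedSpace 𝕜 G]

theorem ContinuousLinearMap.norm_comp_sub_comp_le (A₁ A₂ : F →L[𝕜] G) (B₁ B₂ : E →L[𝕜] F) :
    ‖A₁.comp B₁ - A₂.comp B₂‖ ≤ ‖A₁ - A₂‖ * ‖B₁‖ + ‖A₂‖ * ‖B₁ - B₂‖ := by
  have hsplit : A₁.comp B₁ - A₂.comp B₂ = (A₁ - A₂).comp B₁ + A₂.comp (B₁ - B₂) := by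
    rw [sub_comp, comp_sub]
    abel
  rw [hsplit]
  exact (norm_add_le _ _).trans (add_le_add (opNorm_comp_le _ _) (opNorm_comp_le _ _))

theorem lipschitzWith_fderiv_comp {f : F → G} {φ : E → F} {M C K R : ℝ≥0}
    (hf : Differentiable 𝕜 f) (hφ : Differentiable 𝕜 φ)
    (hf' : LipschitzWith M (fderiv 𝕜 f)) (hf'_le : ∀ y, ‖fderiv 𝕜 f y‖ ≤ C)
    (hφ_lip : LipschitzWith K φ) (hφ' : LipschitzWith R (fderiv 𝕜 φ)) :
    LipschitzWith (M * K ^ 2 + C * R) (fderiv 𝕜 (f ∘ φ)) := by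
  refine LipschitzWith.of_dist_le_mul fun x y => ?_
  rw [dist_eq_norm, dist_eq_norm, fderiv_comp x (hf _) (hφ x), fderiv_comp y (hf _) (hφ y)]
  have hφ'_le : ∀ x, ‖fderiv 𝕜 φ x‖ ≤ K := fun x => norm_fderiv_le_of_lipschitz 𝕜 hφ_lip
  have hf'_sub : ‖fderiv 𝕜 f (φ x) - fderiv 𝕜 f (φ y)‖ ≤ M * (K * ‖x - y‖) :=
    (hf'.norm_sub_le _ _).trans (by gcongr; exact hφ_lip.norm_sub_le x y)
  calc _ ≤ ‖fderiv 𝕜 f (φ x) - fderiv 𝕜 f (φ y)‖ * ‖fderiv 𝕜 φ x‖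
        + ‖fderiv 𝕜 f (φ y)‖ * ‖fderiv 𝕜 φ x - fderiv 𝕜 φ y‖ :=
        ContinuousLinearMap.norm_comp_sub_comp_le _ _ _ _
    _ ≤ M * (K * ‖x - y‖) * K + C * (R * ‖x - y‖) :=
        add_le_add (mul_le_mul hf'_sub (hφ'_le x) (norm_nonneg _) (by positivity))
          (mul_le_mul (hf'_le _) (hφ'.norm_sub_le x y) (norm_nonneg _) C.coe_nonneg)
    _ = ↑(M * K ^ 2 + C * R) * ‖x - y‖ := by push_cast; ring

end Composition

section GradientStep

variable {𝕜 E : Type*} [NontriviallyNormedField 𝕜] [NormedAddCommGroup E] [NormedSpace 𝕜 E]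
  {g : E → E}

theorem LipschitzWith.id_sub_smul {L : ℝ≥0} (hg : LipschitzWith L g) (α : 𝕜) :
    LipschitzWith (1 + ‖α‖₊ * L) (fun x => x - α • g x) :=
  LipschitzWith.id.sub ((lipschitzWith_smul α).comp hg)

theorem fderiv_id_sub_smul (hg : Differentiable 𝕜 g) (α : 𝕜) (x : E) :
    fderiv 𝕜 (fun x => x - α • g x) x = ContinuousLinearMap.id 𝕜 E - α • fderiv 𝕜 g x :=
  ((hasFDerivAt_id x).sub ((hg x).hasFDerivAt.const_smul α)).fderiv

theorem lipschitzWith_fderiv_id_sub_smul {R : ℝ≥0} (hg : Differentiable 𝕜 g)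
    (hg' : LipschitzWith R (fderiv 𝕜 g)) (α : 𝕜) :
    LipschitzWith (‖α‖₊ * R) (fderiv 𝕜 (fun x => x - α • g x)) := by
  have h := (LipschitzWith.const (ContinuousLinearMap.id 𝕜 E)).sub
    ((lipschitzWith_smul α).comp hg')
  rw [zero_add] at h
  rw [funext (fderiv_id_sub_smul hg α)]
  exact h

end GradientStep

section Gradient

variable {𝕜 F : Type*} [RCLike 𝕜] [NormedAddCommGroup F] [InnerProductSpace 𝕜 F] [CompleteSpace F]

theorem norm_fderiv_eq_norm_gradient (f : F → 𝕜) (x : F) : ‖fderiv 𝕜 f x‖ = ‖gradient f x‖ := by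
  rw [← toDual_gradient, LinearIsometryEquiv.norm_map]

theorem lipschitzWith_fderiv_iff_gradient {f : F → 𝕜} {K : ℝ≥0} :
    LipschitzWith K (fderiv 𝕜 f) ↔ LipschitzWith K (gradient f) := by
  rw [← toDual_comp_gradient]
  exact (InnerProductSpace.toDual 𝕜 F).isometry.lipschitzWith_iff K

end Gradient

theorem ContDiff.gradient {F : Type*} [NormedAddCommGroup F] [InnerProductSpace ℝ F]
    [CompleteSpace F] {f : F → ℝ} {n : WithTop ℕ∞} (hf : ContDiff ℝ (n + 1) f) :
    ContDiff ℝ n (gradient f) :=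
  (InnerProductSpace.toDual ℝ F).symm.contDiff.comp (hf.fderiv_right le_rfl)

theorem stmt_10 (d : ℕ) (f : EuclideanSpace ℝ (Fin d) → ℝ) (L ρ G α : ℝ)
    (hC2 : ContDiff ℝ 2 f)
    (hsmooth : ∀ w u, ‖gradient f w - gradient f u‖ ≤ L * ‖w - u‖)
    (hhessLip : ∀ w u, ‖fderiv ℝ (gradient f) w - fderiv ℝ (gradient f) u‖ ≤ ρ * ‖w - u‖)
    (hgradbdd : ∀ w, ‖gradient f w‖ ≤ G)
    (hα : 0 ≤ α)
    (F : EuclideanSpace ℝ (Fin d) → ℝ)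
    (hF : ∀ w, F w = f (w - α • gradient f w))
    (w u : EuclideanSpace ℝ (Fin d)) :
    ‖gradient F w - gradient F u‖ ≤ (L * (1 + α * L) ^ 2 + α * ρ * G) * ‖w - u‖ := by
  -- `0 ≤ L` and `0 ≤ ρ` are read off the hypotheses at two distinct points.
  rcases eq_or_ne w u with rfl | hne
  · simp
  have hwu : 0 < ‖w - u‖ := norm_pos_iff.2 (sub_ne_zero.2 hne)
  lift L to ℝ≥0 using nonneg_of_mul_nonneg_left ((norm_nonneg _).trans (hsmooth w u)) hwu
  lift ρ to ℝ≥0 using nonneg_of_mul_nonneg_left ((norm_nonneg _).trans (hhessLip w u)) hwu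
  lift G to ℝ≥0 using (norm_nonneg _).trans (hgradbdd w)
  lift α to ℝ≥0 using hα
  have hf : Differentiable ℝ f := hC2.differentiable (by norm_num)
  have hg : Differentiable ℝ (gradient f) := (hC2.gradient (n := 1)).differentiable one_ne_zero
  have hg_lip : LipschitzWith L (gradient f) := .of_dist_le_mul fun x y => by
    simpa only [dist_eq_norm] using hsmooth x y
  have hg'_lip : LipschitzWith ρ (fderiv ℝ (gradient f)) := .of_dist_le_mul fun x y => by
    simpa only [dist_eq_norm] using hhessLip x y
  have hF_comp : F = f ∘ fun x => x - (α : ℝ) • gradient f x := funext hF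
  have hF_lip : LipschitzWith (L * (1 + ‖(α : ℝ)‖₊ * L) ^ 2 + G * (‖(α : ℝ)‖₊ * ρ))
      (gradient F) := by
    rw [← lipschitzWith_fderiv_iff_gradient, hF_comp]
    exact lipschitzWith_fderiv_comp hf (by fun_prop)
      (lipschitzWith_fderiv_iff_gradient.2 hg_lip)
      (fun y => (norm_fderiv_eq_norm_gradient f y).trans_le (hgradbdd y))
      (hg_lip.id_sub_smul _) (lipschitzWith_fderiv_id_sub_smul hg hg'_lip _)
  calc ‖gradient F w - gradient F u‖ ≤ _ := hF_lip.norm_sub_le w u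
    _ = _ := by rw [NNReal.nnnorm_eq]; push_cast; ring
end

section
/- Let $f_1, \dots, f_n: \mathbb{R}^d \to \mathbb{R}$ be differentiable and $L$-smooth with average $f = \frac{1}{n}\sum_i f_i$, and suppose $\frac{1}{n}\sum_{i=1}^n \|\nabla f_i(w) - \nabla f(w)\|^2 \leq \gamma_g^2$ for all $w$. Let $\lambda \geq 7L$ and let $\hat\theta_i(w)$ be the minimizer of $\theta \mapsto f_i(\theta) + \frac{\lambda}{2}\|\theta-w\|^2$, with Moreau envelope gradient $\nabla F_i^{(c)}(w) = \lambda(w - \hat\theta_i(w))$, and $\nabla F^{(c)}(w) = \frac{1}{n}\sum_i \nabla F_i^{(c)}(w)$. Then for all $w$: $\frac{1}{n}\sum_{i=1}^n \|\nabla F_i^{(c)}(w) - \nabla F^{(c)}(w)\|^2 \leq \frac{16\lambda^2}{\lambda^2 - 48L^2}\gamma_g^2$. -/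
/-!
The first-order condition at the proximal point gives `λ (w - θ̂ᵢ) = ∇fᵢ(θ̂ᵢ)`, so the deviations of the
`∇Fᵢ(w)` from their mean are `λ` times those of the `θ̂ᵢ` from their mean `θ̄`. By `L`-smoothness,
`∇fᵢ(θ̂ᵢ)` lies within `L/λ` times its own deviation of `∇fᵢ(θ̄)`, and the family `∇fᵢ(θ̄)` has spread
at most `γ_g²`. Since the mean minimizes the sum of squared distances, comparing both families with
the mean of the `∇fᵢ(θ̄)` yields `(1 - 2L²/λ²) S ≤ 2 n γ_g²` for the total spread `S` of the `∇Fᵢ(w)`,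
which is stronger than the claimed bound.
-/

open InnerProductSpace

section Mean

variable {ι E : Type*} [Fintype ι] [NormedAddCommGroup E] [InnerProductSpace ℝ E]

noncomputable def mean (v : ι → E) : E := (Fintype.card ι : ℝ)⁻¹ • ∑ i, v i

noncomputable def sumSqDev (v : ι → E) : ℝ := ∑ i, ‖v i - mean v‖ ^ 2

theorem sum_sub_mean (v : ι → E) : ∑ i, (v i - mean v) = 0 := by
  rcases isEmpty_or_nonempty ι with hι | hι
  · simp
  rw [Finset.sum_sub_distrib, Finset.sum_const, Finset.card_univ, mean,
    ← Nat.cast_smul_eq_nsmul ℝ, smul_smul, mul_inv_cancel₀ (by positivity), one_smul, sub_self]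

theorem sumSqDev_le_sum_norm_sub_sq (v : ι → E) (c : E) :
    sumSqDev v ≤ ∑ i, ‖v i - c‖ ^ 2 := by
  have hsplit : ∀ i, ‖v i - c‖ ^ 2
      = ‖v i - mean v‖ ^ 2 + 2 * inner ℝ (v i - mean v) (mean v - c) + ‖mean v - c‖ ^ 2 := by
    intro i
    rw [← norm_add_sq_real, sub_add_sub_cancel]
  have hcross : ∑ i, inner ℝ (v i - mean v) (mean v - c) = 0 := by
    rw [← sum_inner, sum_sub_mean, inner_zero_left]
  simp only [hsplit, Finset.sum_add_distrib, ← Finset.mul_sum, hcross]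
  unfold sumSqDev
  have : 0 ≤ ∑ i : ι, ‖mean v - c‖ ^ 2 := Finset.sum_nonneg fun _ _ => by positivity
  linarith

theorem smul_sub_sub_mean [Nonempty ι] (a : ℝ) (w : E) (θ : ι → E) (i : ι) :
    a • (w - θ i) - mean (fun j => a • (w - θ j)) = a • (mean θ - θ i) := by
  have hcard : (Fintype.card ι : ℝ) ≠ 0 := by positivity
  simp only [mean, ← Finset.smul_sum, Finset.sum_sub_distrib, Finset.sum_const,
    Finset.card_univ, ← Nat.cast_smul_eq_nsmul ℝ]
  match_scalars <;> field_simp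
  ring

theorem sumSqDev_le_of_norm_sub_le (u v : ι → E) {κ : ℝ}
    (h : ∀ i, ‖u i - v i‖ ≤ κ * ‖u i - mean u‖) :
    (1 - 2 * κ ^ 2) * sumSqDev u ≤ 2 * sumSqDev v := by
  have hpt : ∀ i, ‖u i - mean v‖ ^ 2 ≤ 2 * κ ^ 2 * ‖u i - mean u‖ ^ 2 + 2 * ‖v i - mean v‖ ^ 2 := by
    intro i
    have htri : ‖u i - mean v‖ ≤ ‖u i - v i‖ + ‖v i - mean v‖ := norm_sub_le_norm_sub_add_norm_sub _ _ _
    nlinarith [norm_nonneg (u i - mean v), norm_nonneg (u i - v i), norm_nonneg (v i - mean v),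
      sq_nonneg (‖u i - v i‖ - ‖v i - mean v‖), h i]
  have hsum := (sumSqDev_le_sum_norm_sub_sq u (mean v)).trans (Finset.sum_le_sum fun i _ => hpt i)
  rw [Finset.sum_add_distrib, ← Finset.mul_sum, ← Finset.mul_sum] at hsum
  unfold sumSqDev at *
  linarith

end Mean

theorem gradient_eq_smul_sub_of_forall_le {E : Type*} [NormedAddCommGroup E]
    [InnerProductSpace ℝ E] [CompleteSpace E] {g : E → ℝ} {lam : ℝ} {w x : E}
    (hg : DifferentiableAt ℝ g x)
    (hmin : ∀ θ, g x + lam / 2 * ‖x - w‖ ^ 2 ≤ g θ + lam / 2 * ‖θ - w‖ ^ 2) :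
    gradient g x = lam • (w - x) := by
  have hφ := hg.hasFDerivAt.add ((((hasFDerivAt_id x).sub_const w).norm_sq).const_mul (lam / 2))
  have h0 := IsLocalMin.hasFDerivAt_eq_zero (Filter.Eventually.of_forall hmin) hφ
  have hv : ∀ v, inner ℝ (gradient g x - lam • (w - x)) v = 0 := by
    intro v
    have := congrArg (fun T => T v) h0
    simp only [id_eq, map_sub, ContinuousLinearMap.comp_id, add_apply, smul_apply, sub_apply,
      coe_innerSL_apply, nsmul_eq_mul, Nat.cast_ofNat, smul_eq_mul, zero_apply, gradient,
      inner_sub_left, toDual_symm_apply, inner_smul_left, Real.ringHom_apply] at this ⊢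
    linarith
  exact sub_eq_zero.mp (inner_self_eq_zero.mp (hv _))

theorem div_le_of_one_sub_two_mul_sq_mul_le {L lam S m γ : ℝ} (hgap : 48 * L ^ 2 < lam ^ 2)
    (hm : 0 < m) (hS : 0 ≤ S) (h : (1 - 2 * (L / lam) ^ 2) * S ≤ 2 * (m * γ ^ 2)) :
    S / m ≤ 16 * lam ^ 2 / (lam ^ 2 - 48 * L ^ 2) * γ ^ 2 := by
  have hlam : lam ≠ 0 := by rintro rfl; nlinarith
  have hspread : (lam ^ 2 - 2 * L ^ 2) * S ≤ 2 * lam ^ 2 * (m * γ ^ 2) :=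
    calc (lam ^ 2 - 2 * L ^ 2) * S = lam ^ 2 * ((1 - 2 * (L / lam) ^ 2) * S) := by field_simp
      _ ≤ lam ^ 2 * (2 * (m * γ ^ 2)) := mul_le_mul_of_nonneg_left h (sq_nonneg lam)
      _ = 2 * lam ^ 2 * (m * γ ^ 2) := by ring
  rw [div_le_iff₀ hm, div_mul_eq_mul_div, div_mul_eq_mul_div, le_div_iff₀ (by linarith)]
  nlinarith [mul_nonneg hS (sq_nonneg lam), mul_nonneg hS (sq_nonneg L)]

theorem stmt_13 (d n : ℕ) (hn : 0 < n)
    (f : Fin n → EuclideanSpace ℝ (Fin d) → ℝ) (L lam γg : ℝ) (hL : 0 < L)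
    (hdiff : ∀ i, Differentiable ℝ (f i))
    (hsmooth : ∀ i w u, ‖gradient (f i) w - gradient (f i) u‖ ≤ L * ‖w - u‖)
    (hdiv : ∀ w, (1 / (n : ℝ)) * ∑ i, ‖gradient (f i) w
        - (n : ℝ)⁻¹ • ∑ j, gradient (f j) w‖ ^ 2 ≤ γg ^ 2)
    (hlam : 7 * L ≤ lam)
    (θhat : Fin n → EuclideanSpace ℝ (Fin d) → EuclideanSpace ℝ (Fin d))
    (hθhat : ∀ i w θ, f i (θhat i w) + lam / 2 * ‖θhat i w - w‖ ^ 2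
        ≤ f i θ + lam / 2 * ‖θ - w‖ ^ 2)
    (w : EuclideanSpace ℝ (Fin d)) :
    (1 / (n : ℝ)) * ∑ i, ‖lam • (w - θhat i w)
        - (n : ℝ)⁻¹ • ∑ j, lam • (w - θhat j w)‖ ^ 2
      ≤ 16 * lam ^ 2 / (lam ^ 2 - 48 * L ^ 2) * γg ^ 2 := by
  have : Nonempty (Fin n) := ⟨⟨0, hn⟩⟩
  have hlam0 : 0 < lam := by linarith
  set θ : Fin n → EuclideanSpace ℝ (Fin d) := fun i => θhat i w
  set u : Fin n → EuclideanSpace ℝ (Fin d) := fun i => lam • (w - θ i)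
  have hgrad : ∀ i, gradient (f i) (θ i) = u i := fun i =>
    gradient_eq_smul_sub_of_forall_le (hdiff i _) (hθhat i w)
  have hdev : ∀ i, ‖u i - gradient (f i) (mean θ)‖ ≤ L / lam * ‖u i - mean u‖ := by
    intro i
    have hu : u i - mean u = lam • (mean θ - θ i) := smul_sub_sub_mean lam w θ i
    rw [hu, ← hgrad i, norm_smul, Real.norm_of_nonneg hlam0.le, norm_sub_rev (mean θ)]
    calc _ ≤ L * ‖θ i - mean θ‖ := hsmooth i _ _
      _ = _ := by field_simp
  have hstable := sumSqDev_le_of_norm_sub_le u (fun i => gradient (f i) (mean θ)) hdev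
  have hvar : sumSqDev (fun i => gradient (f i) (mean θ)) ≤ n * γg ^ 2 := by
    have h := hdiv (mean θ)
    rw [one_div, inv_mul_le_iff₀ (by positivity)] at h
    simpa only [sumSqDev, mean, Fintype.card_fin] using h
  have hlhs : (1 / (n : ℝ)) * ∑ i, ‖lam • (w - θhat i w) - (n : ℝ)⁻¹ • ∑ j, lam • (w - θhat j w)‖ ^ 2
      = sumSqDev u / n := by simp [sumSqDev, mean, u, θ, div_eq_inv_mul]
  rw [hlhs]
  exact div_le_of_one_sub_two_mul_sq_mul_le (by nlinarith) (by positivity)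
    (Finset.sum_nonneg fun i _ => by positivity) (by linarith)
end
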